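/- arXiv:1908.09578 — 2 statements merged into one kernel-verified Lean document; each statement's English description precedes it below -/
import Mathlib

section
/- One has the exact polynomial identity F(uvx, y, 4u⁴v²z, 4u³v³z) = 16u⁷v⁵z · (y²z − x³ − f(u,v)·xz² − g(u,v)·z³) in ℚ[α,β,γ,δ,ε,ζ][u,v,x,y,z], where f(u,v) = −4u³v³(γu² + 3αuv + εv²) and g(u,v) = 8u⁵v⁵(δu² − 2βuv + ζv²). (This substitution, compatible with the pencil of planes uW − vZ = 0 through the line L₂, exhibits the standard Jacobian elliptic fibration π_std on the K3 surface X(α,β,γ,δ,ε,ζ), with Weierstrass equation y²z = x³ + f(u,v)xz² + g(u,v)z³.) -/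
noncomputable section

open MvPolynomial

/-- The defining polynomial `F_{α,β,γ,δ,ε,ζ}` of the generalized Inose quartic, regarded as
an expression over any commutative `ℚ`-algebra. -/
def inoseF {R : Type*} [CommRing R] [Algebra ℚ R] (α β γ δ ε ζ X Y Z W : R) : R :=
  Y ^ 2 * Z * W - 4 * X ^ 3 * Z + 3 * α * X * Z * W ^ 2 + β * Z * W ^ 3 + γ * X * Z ^ 2 * W
    - algebraMap ℚ R (1 / 2) * (δ * Z ^ 2 * W ^ 2 + ζ * W ^ 4) + ε * X * W ^ 3

/-- Exact identity in `ℚ[α,β,γ,δ,ε,ζ][u,v,x,y,z]` (variables `0,…,5` are `α,…,ζ`;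
`6 = u`, `7 = v`, `8 = x`, `9 = y`, `10 = z`):
`F(uvx, y, 4u⁴v²z, 4u³v³z) = 16u⁷v⁵z (y²z − x³ − f·xz² − g·z³)` with
`f = −4u³v³(γu² + 3αuv + εv²)` and `g = 8u⁵v⁵(δu² − 2βuv + ζv²)`, exhibiting the
standard Jacobian elliptic fibration. -/
theorem stmt8 :
    inoseF (X 0 : MvPolynomial (Fin 11) ℚ) (X 1) (X 2) (X 3) (X 4) (X 5)
        (X 6 * X 7 * X 8) (X 9) (4 * X 6 ^ 4 * X 7 ^ 2 * X 10) (4 * X 6 ^ 3 * X 7 ^ 3 * X 10)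
      = 16 * X 6 ^ 7 * X 7 ^ 5 * X 10 *
        (X 9 ^ 2 * X 10 - X 8 ^ 3
          - (-4 * X 6 ^ 3 * X 7 ^ 3 * (X 2 * X 6 ^ 2 + 3 * X 0 * X 6 * X 7 + X 4 * X 7 ^ 2))
              * X 8 * X 10 ^ 2
          - (8 * X 6 ^ 5 * X 7 ^ 5 * (X 3 * X 6 ^ 2 - 2 * X 1 * X 6 * X 7 + X 5 * X 7 ^ 2))
              * X 10 ^ 3) := by
  simp only [inoseF]
  have h : (algebraMap ℚ (MvPolynomial (Fin 11) ℚ)) (1/2) = C (1/2) := rfl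
  have h2 : (2 : MvPolynomial (Fin 11) ℚ) * C (1/2) = 1 := by
    rw [show (2 : MvPolynomial (Fin 11) ℚ) = C 2 from (map_ofNat C 2).symm, ← C_mul]
    norm_num
  rw [h]
  linear_combination (-128 * (X 6 ^ 12 * X 7 ^ 12 * X 10 ^ 4 * X 5 +
    X 6 ^ 14 * X 7 ^ 10 * X 10 ^ 4 * X 3)) * h2
end
end

section
/- One has the exact polynomial identity F(2uvx, y, 4v⁵(ζv − 2εu)z, 2v²x) = 8v⁷(ζv − 2εu)x · (y²z − x³ − A(u,v)·x²z − B(u,v)·xz²) in ℚ[α,β,γ,δ,ε,ζ][u,v,x,y,z], where A(u,v) = 4v(4u³ − 3αuv² − βv³) and B(u,v) = 4v⁶(2γu − δv)(2εu − ζv). (This substitution, compatible with the pencil of planes uW − vX = 0 through the line L₁, exhibits the alternate Jacobian elliptic fibration π_alt on X(α,β,γ,δ,ε,ζ), with equation y²z = x(x² + A(u,v)xz + B(u,v)z²).) -/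
noncomputable section

open MvPolynomial

/-- Exact identity in `ℚ[α,β,γ,δ,ε,ζ][u,v,x,y,z]` (variables `0,…,5` are `α,…,ζ`;
`6 = u`, `7 = v`, `8 = x`, `9 = y`, `10 = z`):
`F(2uvx, y, 4v⁵(ζv − 2εu)z, 2v²x) = 8v⁷(ζv − 2εu)x (y²z − x³ − A·x²z − B·xz²)` with
`A = 4v(4u³ − 3αuv² − βv³)` and `B = 4v⁶(2γu − δv)(2εu − ζv)`, exhibiting the alternate
Jacobian elliptic fibration. -/
theorem stmt10 :
    inoseF (X 0 : MvPolynomial (Fin 11) ℚ) (X 1) (X 2) (X 3) (X 4) (X 5)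
        (2 * X 6 * X 7 * X 8) (X 9)
        (4 * X 7 ^ 5 * (X 5 * X 7 - 2 * X 4 * X 6) * X 10) (2 * X 7 ^ 2 * X 8)
      = 8 * X 7 ^ 7 * (X 5 * X 7 - 2 * X 4 * X 6) * X 8 *
        (X 9 ^ 2 * X 10 - X 8 ^ 3
          - (4 * X 7 * (4 * X 6 ^ 3 - 3 * X 0 * X 6 * X 7 ^ 2 - X 1 * X 7 ^ 3))
              * X 8 ^ 2 * X 10
          - (4 * X 7 ^ 6 * (2 * X 2 * X 6 - X 3 * X 7) * (2 * X 4 * X 6 - X 5 * X 7))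
              * X 8 * X 10 ^ 2) := by
  have h : (2 : MvPolynomial (Fin 11) ℚ) * C ((1:ℚ)/2) = 1 := by
    rw [show (2 : MvPolynomial (Fin 11) ℚ) = C 2 from (map_ofNat C 2).symm, ← C_mul]
    norm_num
  simp only [inoseF, algebraMap_eq]
  linear_combination (-8 * X 7 ^ 8 * X 5 * X 8 ^ 4
    - 128 * X 7 ^ 14 * X 4 ^ 2 * X 6 ^ 2 * X 10 ^ 2 * X 8 ^ 2 * X 3
    + 128 * X 7 ^ 15 * X 5 * X 4 * X 6 * X 10 ^ 2 * X 8 ^ 2 * X 3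
    - 32 * X 7 ^ 16 * X 5 ^ 2 * X 10 ^ 2 * X 8 ^ 2 * X 3) * h
end
end
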